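/- arXiv:1807.10399 — 4 statements merged into one kernel-verified Lean document; each statement's English description precedes it below -/
import Mathlib

section
/- Let p be a strictly positive joint pmf on Fin m × Fin n and q a strictly positive conditional pmf, and let β ∈ ℝ. Then q is a fixed point of the LatentSearch update, i.e. T_β(q) = q, if and only if q is a first-order stationary point of the loss L_β subject to the normalization constraints; that is, if and only if for every direction v : Fin k → Fin m → Fin n → ℝ satisfying ∑_z v z x y = 0 for all x, y, the directional (Fréchet) derivative of L_β at q along v equals zero. Equivalently, T_β(q) = q if and only if there exists δ : Fin m → Fin n → ℝ such that log( q z x y · (qZ z)^{1−β} / (qX z x · qY z y) ) = δ x y for all z, x, y. -/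
open Real Finset Filter

/-- A strictly positive joint pmf on `Fin m × Fin n`. -/
def IsJointPMF {m n : ℕ} (p : Fin m → Fin n → ℝ) : Prop :=
  (∀ x y, 0 < p x y) ∧ (∑ x, ∑ y, p x y = 1)

/-- A strictly positive conditional pmf `q z x y = q(z | x, y)`. -/
def IsCondPMF {m n k : ℕ} (q : Fin k → Fin m → Fin n → ℝ) : Prop :=
  (∀ z x y, 0 < q z x y) ∧ (∀ x y, ∑ z, q z x y = 1)

/-- Marginal `q(z | x)`. -/
noncomputable def qX {m n k : ℕ} (p : Fin m → Fin n → ℝ)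
    (q : Fin k → Fin m → Fin n → ℝ) (z : Fin k) (x : Fin m) : ℝ :=
  (∑ y, q z x y * p x y) / (∑ y, p x y)

/-- Marginal `q(z | y)`. -/
noncomputable def qY {m n k : ℕ} (p : Fin m → Fin n → ℝ)
    (q : Fin k → Fin m → Fin n → ℝ) (z : Fin k) (y : Fin n) : ℝ :=
  (∑ x, q z x y * p x y) / (∑ x, p x y)

/-- Marginal `q(z)`. -/
noncomputable def qZ {m n k : ℕ} (p : Fin m → Fin n → ℝ)
    (q : Fin k → Fin m → Fin n → ℝ) (z : Fin k) : ℝ :=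
  ∑ x, ∑ y, q z x y * p x y

/-- The LatentSearch update `T_β(q)`. Here `(qZ z) ^ (1 - β)` is the real power `rpow`. -/
noncomputable def latentUpdate {m n k : ℕ} (β : ℝ) (p : Fin m → Fin n → ℝ)
    (q : Fin k → Fin m → Fin n → ℝ) : Fin k → Fin m → Fin n → ℝ :=
  fun z x y =>
    (qX p q z x * qY p q z y / (qZ p q z) ^ (1 - β)) /
      (∑ z', qX p q z' x * qY p q z' y / (qZ p q z') ^ (1 - β))

/-- The loss `L_β(q) = I(X;Y|Z) + β H(Z)` computed from the joint `r(x,y,z) = q z x y * p x y`. -/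
noncomputable def loss {m n k : ℕ} (β : ℝ) (p : Fin m → Fin n → ℝ)
    (q : Fin k → Fin m → Fin n → ℝ) : ℝ :=
  (∑ x, ∑ y, ∑ z, (q z x y * p x y) *
      Real.log ((q z x y * p x y) * qZ p q z /
        ((∑ y', q z x y' * p x y') * (∑ x', q z x' y * p x' y)))) -
    β * ∑ z, qZ p q z * Real.log (qZ p q z)

/-- The mutual information `I(X;Y)` of the observed joint pmf `p`. -/
noncomputable def mutualInfo {m n : ℕ} (p : Fin m → Fin n → ℝ) : ℝ :=
  ∑ x, ∑ y, p x y * Real.log (p x y / ((∑ y', p x y') * (∑ x', p x' y)))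

/-!
Write `r = q p` for the joint law of `(Z, X, Y)`. For positive `q` the loss is a signed sum of
`s log s` over `r` and its marginals, since `I(X;Y|Z) = H(X,Z) + H(Y,Z) - H(X,Y,Z) - H(Z)`.
Differentiating along `q + t v` therefore gives `∑ v p G` with
`G = log (q qZ^{1-β} / (qX qY))`, up to terms depending only on `(x, y)`, which vanish when
`∑_z v = 0`. So stationarity says that `G` is orthogonal to every feasible direction, i.e. that
`G` does not depend on `z`. On the other hand `G(·, x, y)` is constant exactly when `q(·|x,y)` is
proportional to `qX qY / qZ^{1-β}`, and after normalisation this is the fixed-point equation.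
-/

open Topology

section

variable {Z X Y : Type*} [Fintype Z] [Fintype X] [Fintype Y]

theorem sum_sum_sum_mul_eq_zero_of_sum_eq_zero {v : Z → X → Y → ℝ}
    (hv : ∀ x y, ∑ z, v z x y = 0) (c : X → Y → ℝ) :
    ∑ z, ∑ x, ∑ y, v z x y * c x y = 0 := by
  rw [sum_comm]
  refine sum_eq_zero fun x _ => ?_
  rw [sum_comm]
  exact sum_eq_zero fun y _ => by rw [← sum_mul, hv, zero_mul]

theorem exists_eq_iff_forall_sum_mul_eq_zero [DecidableEq Z] [DecidableEq X] [DecidableEq Y]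
    {w : X → Y → ℝ} (hw : ∀ x y, w x y ≠ 0) (G : Z → X → Y → ℝ) :
    (∃ δ : X → Y → ℝ, ∀ z x y, G z x y = δ x y) ↔
      ∀ v : Z → X → Y → ℝ, (∀ x y, ∑ z, v z x y = 0) →
        ∑ z, ∑ x, ∑ y, v z x y * w x y * G z x y = 0 := by
  constructor
  · rintro ⟨δ, hδ⟩ v hv
    simp_rw [hδ, mul_assoc]
    exact sum_sum_sum_mul_eq_zero_of_sum_eq_zero hv _
  · intro h
    rcases isEmpty_or_nonempty Z with _ | ⟨⟨z₀⟩⟩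
    · exact ⟨0, fun z => isEmptyElim z⟩
    refine ⟨G z₀, fun z x y => ?_⟩
    let v : Z → X → Y → ℝ := fun z' x' y' =>
      if x' = x ∧ y' = y then (if z' = z then 1 else 0) - (if z' = z₀ then 1 else 0) else 0
    have hv : ∀ x' y', ∑ z', v z' x' y' = 0 := by
      intro x' y'
      simp only [v]
      split_ifs <;> simp [sum_sub_distrib]
    have hvG := h v hv
    simp only [v, ite_and, ite_mul, sub_mul, one_mul, zero_mul, sum_ite_irrel, sum_ite_eq',
      mem_univ, ↓reduceIte, sum_const_zero, sum_sub_distrib] at hvG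
    rw [← mul_sub, mul_eq_zero, sub_eq_zero] at hvG
    exact hvG.resolve_left (hw x y)

end

theorem div_sum_eq_iff_exists_log_div_eq {ι : Type*} [Fintype ι] {a q : ι → ℝ}
    (ha : ∀ i, 0 < a i) (hq : ∀ i, 0 < q i) (hq1 : ∑ i, q i = 1) :
    (∀ i, a i / ∑ j, a j = q i) ↔ ∃ c, ∀ i, log (q i / a i) = c := by
  constructor
  · intro h
    refine ⟨-log (∑ j, a j), fun i => ?_⟩
    rw [← h i, div_div_cancel_left' (ha i).ne', log_inv]
  · rintro ⟨c, hc⟩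
    have hqa i : q i = exp c * a i := by
      rw [← hc i, exp_log (div_pos (hq i) (ha i)), div_mul_cancel₀ _ (ha i).ne']
    have hsum : exp c * ∑ j, a j = 1 := by
      rw [mul_sum, ← hq1]
      exact sum_congr rfl fun j _ => (hqa j).symm
    intro i
    rw [hqa i, div_eq_iff (right_ne_zero_of_mul_eq_one hsum)]
    linear_combination (-a i) * hsum

section

variable {m n k : ℕ} {p : Fin m → Fin n → ℝ} {q : Fin k → Fin m → Fin n → ℝ}

theorem qX_pos [Nonempty (Fin n)] (hp : ∀ x y, 0 < p x y) (hq : ∀ z x y, 0 < q z x y)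
    (z : Fin k) (x : Fin m) : 0 < qX p q z x :=
  div_pos (sum_pos (fun y _ => mul_pos (hq z x y) (hp x y)) univ_nonempty)
    (sum_pos (fun y _ => hp x y) univ_nonempty)

theorem qY_pos [Nonempty (Fin m)] (hp : ∀ x y, 0 < p x y) (hq : ∀ z x y, 0 < q z x y)
    (z : Fin k) (y : Fin n) : 0 < qY p q z y :=
  div_pos (sum_pos (fun x _ => mul_pos (hq z x y) (hp x y)) univ_nonempty)
    (sum_pos (fun x _ => hp x y) univ_nonempty)

theorem qZ_pos [Nonempty (Fin m)] [Nonempty (Fin n)] (hp : ∀ x y, 0 < p x y)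
    (hq : ∀ z x y, 0 < q z x y) (z : Fin k) : 0 < qZ p q z :=
  sum_pos (fun x _ => sum_pos (fun y _ => mul_pos (hq z x y) (hp x y))
    univ_nonempty) univ_nonempty

theorem latentUpdate_eq_self_iff [Nonempty (Fin m)] [Nonempty (Fin n)] (β : ℝ)
    (hp : ∀ x y, 0 < p x y) (hq : IsCondPMF q) :
    latentUpdate β p q = q ↔ ∃ δ : Fin m → Fin n → ℝ, ∀ z x y,
      log (q z x y * qZ p q z ^ (1 - β) / (qX p q z x * qY p q z y)) = δ x y := by
  have key x y := div_sum_eq_iff_exists_log_div_eq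
    (a := fun z => qX p q z x * qY p q z y / qZ p q z ^ (1 - β)) (q := fun z => q z x y)
    (fun z => div_pos (mul_pos (qX_pos hp hq.1 z x) (qY_pos hp hq.1 z y))
      (rpow_pos_of_pos (qZ_pos hp hq.1 z) _))
    (fun z => hq.1 z x y) (hq.2 x y)
  simp only [div_div_eq_mul_div] at key
  constructor
  · intro h
    choose δ hδ using fun x y => (key x y).1 fun z => congrFun (congrFun (congrFun h z) x) y
    exact ⟨δ, fun z x y => hδ x y z⟩
  · rintro ⟨δ, hδ⟩
    funext z x y
    exact (key x y).2 ⟨δ x y, fun z => hδ z x y⟩ z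

theorem loss_eq_sum_mul_log (β : ℝ) (hp : ∀ x y, 0 < p x y) (hq : ∀ z x y, 0 < q z x y) :
    loss β p q =
      ∑ z, ∑ x, ∑ y, q z x y * p x y * log (q z x y * p x y)
        + (1 - β) * ∑ z, qZ p q z * log (qZ p q z)
        - ∑ z, ∑ x, (∑ y, q z x y * p x y) * log (∑ y, q z x y * p x y)
        - ∑ z, ∑ y, (∑ x, q z x y * p x y) * log (∑ x, q z x y * p x y) := by
  have hr z x y : 0 < q z x y * p x y := mul_pos (hq z x y) (hp x y)
  have hsplit z x y : q z x y * p x y * log (q z x y * p x y * qZ p q z /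
      ((∑ y', q z x y' * p x y') * ∑ x', q z x' y * p x' y)) =
      q z x y * p x y * log (q z x y * p x y) + q z x y * p x y * log (qZ p q z)
        - q z x y * p x y * log (∑ y', q z x y' * p x y')
        - q z x y * p x y * log (∑ x', q z x' y * p x' y) := by
    have hX : 0 < ∑ y', q z x y' * p x y' := sum_pos (fun y' _ => hr z x y') ⟨y, mem_univ y⟩
    have hY : 0 < ∑ x', q z x' y * p x' y := sum_pos (fun x' _ => hr z x' y) ⟨x, mem_univ x⟩
    have hZ : 0 < qZ p q z :=
      sum_pos (fun x' _ => sum_pos (fun y' _ => hr z x' y') ⟨y, mem_univ y⟩) ⟨x, mem_univ x⟩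
    rw [log_div (mul_pos (hr z x y) hZ).ne' (mul_pos hX hY).ne', log_mul (hr z x y).ne' hZ.ne',
      log_mul hX.ne' hY.ne']
    ring
  have hrot : loss β p q + β * ∑ z, qZ p q z * log (qZ p q z) = ∑ z, ∑ x, ∑ y,
      q z x y * p x y * log (q z x y * p x y * qZ p q z /
        ((∑ y', q z x y' * p x y') * ∑ x', q z x' y * p x' y)) := by
    rw [loss, sub_add_cancel]
    exact (sum_congr rfl fun x _ => sum_comm).trans sum_comm
  have hZ : ∑ z, ∑ x, ∑ y, q z x y * p x y * log (qZ p q z) =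
      ∑ z, qZ p q z * log (qZ p q z) := by
    simp only [qZ, sum_mul]
  have hX : ∑ z, ∑ x, ∑ y, q z x y * p x y * log (∑ y', q z x y' * p x y') =
      ∑ z, ∑ x, (∑ y, q z x y * p x y) * log (∑ y, q z x y * p x y) := by
    simp only [sum_mul]
  have hY : ∑ z, ∑ x, ∑ y, q z x y * p x y * log (∑ x', q z x' y * p x' y) =
      ∑ z, ∑ y, (∑ x, q z x y * p x y) * log (∑ x, q z x y * p x y) := by
    simp only [sum_mul]
    exact sum_congr rfl fun z _ => sum_comm
  simp only [hsplit, sum_add_distrib, sum_sub_distrib, hZ, hX, hY] at hrot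
  linear_combination hrot

-- The constant `β` collects the `+ 1` of `(s log s)' = log s + 1` from the four entropy terms.
theorem hasDerivAt_loss_add_smul [Nonempty (Fin m)] [Nonempty (Fin n)] (β : ℝ)
    (hp : ∀ x y, 0 < p x y) (hq : ∀ z x y, 0 < q z x y)
    (v : Fin k → Fin m → Fin n → ℝ) :
    HasDerivAt (fun t => loss β p (fun z x y => q z x y + t * v z x y))
      (∑ z, ∑ x, ∑ y, v z x y * p x y *
        (log (q z x y * p x y) + (1 - β) * log (qZ p q z) - log (∑ y', q z x y' * p x y')
          - log (∑ x', q z x' y * p x' y) - β)) 0 := by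
  set r : ℝ → Fin k → Fin m → Fin n → ℝ :=
    fun t z x y => (q z x y + t * v z x y) * p x y
  have hr z x y : HasDerivAt (fun t => r t z x y) (v z x y * p x y) 0 := by
    simpa using
      (((hasDerivAt_id (0 : ℝ)).mul_const (v z x y)).const_add (q z x y)).mul_const (p x y)
  have hsum {ι : Type} [Fintype ι] {A : ι → ℝ → ℝ} {A' : ι → ℝ}
      (h : ∀ i, HasDerivAt (A i) (A' i) 0) : HasDerivAt (fun t => ∑ i, A i t) (∑ i, A' i) 0 :=
    HasDerivAt.fun_sum fun i _ => h i
  have hmulLog {f : ℝ → ℝ} {f' a : ℝ} (hf : HasDerivAt f f' 0) (hfa : f 0 = a)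
      (ha : 0 < a) :
      HasDerivAt (fun t => f t * log (f t)) ((log a + 1) * f') 0 :=
    (hasDerivAt_mul_log ha.ne').comp_of_eq 0 hf hfa.symm
  have hJ := hsum fun z => hsum fun x => hsum fun y =>
    hmulLog (hr z x y) (by simp [r]) (mul_pos (hq z x y) (hp x y))
  have hZ := hsum fun z => hmulLog (hsum fun x => hsum fun y => hr z x y) (by simp [r, qZ])
    (qZ_pos hp hq z)
  have hX := hsum fun z => hsum fun x => hmulLog (hsum fun y => hr z x y) (by simp [r])
    (sum_pos (fun y _ => mul_pos (hq z x y) (hp x y)) univ_nonempty)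
  have hY := hsum fun z => hsum fun y => hmulLog (hsum fun x => hr z x y) (by simp [r])
    (sum_pos (fun x _ => mul_pos (hq z x y) (hp x y)) univ_nonempty)
  have hpos : ∀ᶠ t in 𝓝 0, ∀ z x y, 0 < q z x y + t * v z x y := by
    simp only [eventually_all]
    intro z x y
    refine Tendsto.eventually_const_lt (hq z x y) ?_
    simpa using ((continuous_mul_const (v z x y)).tendsto 0).const_add (q z x y)
  refine (((hJ.add (hZ.const_mul (1 - β))).sub hX).sub hY).congr_of_eventuallyEq ?_
    |>.congr_deriv ?_
  · filter_upwards [hpos] with t ht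
    exact loss_eq_sum_mul_log β hp ht
  have hYswap : ∑ z, ∑ y, (log (∑ x', q z x' y * p x' y) + 1) * ∑ x, v z x y * p x y =
      ∑ z, ∑ x, ∑ y, (log (∑ x', q z x' y * p x' y) + 1) * (v z x y * p x y) :=
    sum_congr rfl fun z _ => by simp only [mul_sum]; exact sum_comm
  rw [hYswap]
  simp only [mul_sum, ← sum_add_distrib, ← sum_sub_distrib]
  exact sum_congr rfl fun z _ => sum_congr rfl fun x _ => sum_congr rfl fun y _ => by ring

theorem hasDerivAt_loss_add_smul_of_sum_eq_zero [Nonempty (Fin m)] [Nonempty (Fin n)] (β : ℝ)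
    (hp : ∀ x y, 0 < p x y) (hq : ∀ z x y, 0 < q z x y) {v : Fin k → Fin m → Fin n → ℝ}
    (hv : ∀ x y, ∑ z, v z x y = 0) :
    HasDerivAt (fun t => loss β p (fun z x y => q z x y + t * v z x y))
      (∑ z, ∑ x, ∑ y, v z x y * p x y *
        log (q z x y * qZ p q z ^ (1 - β) / (qX p q z x * qY p q z y))) 0 := by
  refine (hasDerivAt_loss_add_smul β hp hq v).congr_deriv ?_
  set c : Fin m → Fin n → ℝ :=
    fun x y => log (p x y) - log (∑ y', p x y') - log (∑ x', p x' y) - β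
  have hlog z x y : log (q z x y * p x y) + (1 - β) * log (qZ p q z)
      - log (∑ y', q z x y' * p x y') - log (∑ x', q z x' y * p x' y) - β =
      log (q z x y * qZ p q z ^ (1 - β) / (qX p q z x * qY p q z y)) + c x y := by
    have hpX : 0 < ∑ y', p x y' := sum_pos (fun y' _ => hp x y') univ_nonempty
    have hpY : 0 < ∑ x', p x' y := sum_pos (fun x' _ => hp x' y) univ_nonempty
    have hqX := qX_pos hp hq z x
    have hqY := qY_pos hp hq z y
    have hqZ := qZ_pos hp hq z
    have hrX : ∑ y', q z x y' * p x y' = qX p q z x * ∑ y', p x y' :=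
      (div_mul_cancel₀ _ hpX.ne').symm
    have hrY : ∑ x', q z x' y * p x' y = qY p q z y * ∑ x', p x' y :=
      (div_mul_cancel₀ _ hpY.ne').symm
    rw [hrX, hrY, log_div (mul_pos (hq z x y) (rpow_pos_of_pos hqZ _)).ne' (mul_pos hqX hqY).ne',
      log_mul (hq z x y).ne' (rpow_pos_of_pos hqZ _).ne', log_rpow hqZ,
      log_mul (hq z x y).ne' (hp x y).ne', log_mul hqX.ne' hpX.ne', log_mul hqY.ne' hpY.ne',
      log_mul hqX.ne' hqY.ne']
    ring
  simp only [hlog, mul_add, sum_add_distrib, mul_assoc, sum_sum_sum_mul_eq_zero_of_sum_eq_zero hv,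
    add_zero]

end

theorem IsJointPMF.nonempty {m n : ℕ} {p : Fin m → Fin n → ℝ} (hp : IsJointPMF p) :
    Nonempty (Fin m) ∧ Nonempty (Fin n) := by
  obtain ⟨x, -, hx⟩ := exists_ne_zero_of_sum_ne_zero (hp.2 ▸ one_ne_zero)
  obtain ⟨y, -, -⟩ := exists_ne_zero_of_sum_ne_zero hx
  exact ⟨⟨x⟩, ⟨y⟩⟩

theorem latentUpdate_fixedPoint_iff_stationary_general (m n k : ℕ) (β : ℝ)
    (p : Fin m → Fin n → ℝ) (hp : IsJointPMF p)
    (q : Fin k → Fin m → Fin n → ℝ) (hq : IsCondPMF q) :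
    (latentUpdate β p q = q ↔
      ∀ v : Fin k → Fin m → Fin n → ℝ, (∀ x y, ∑ z, v z x y = 0) →
        deriv (fun t : ℝ => loss β p (fun z x y => q z x y + t * v z x y)) 0 = 0) ∧
    (latentUpdate β p q = q ↔
      ∃ δ : Fin m → Fin n → ℝ, ∀ z x y,
        Real.log (q z x y * (qZ p q z) ^ (1 - β) / (qX p q z x * qY p q z y)) = δ x y) := by
  obtain ⟨_, _⟩ := hp.nonempty
  have hfix := latentUpdate_eq_self_iff β hp.1 hq
  refine ⟨hfix.trans ?_, hfix⟩
  rw [exists_eq_iff_forall_sum_mul_eq_zero fun x y => (hp.1 x y).ne']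
  refine forall₂_congr fun v hv => ?_
  rw [(hasDerivAt_loss_add_smul_of_sum_eq_zero β hp.1 hq.1 hv).deriv]

/-- `q` is a fixed point of the LatentSearch update `T_β` iff it is a
first-order stationary point of the loss `L_β` subject to the normalization constraints
(directional derivatives along feasible directions vanish); equivalently, iff
`log(q(z|x,y) (qZ z)^{1-β} / (q(z|x) q(z|y)))` does not depend on `z`. -/
theorem latentUpdate_fixedPoint_iff_stationary (m n k : ℕ)
    (hm : 1 ≤ m) (hn : 1 ≤ n) (hk : 1 ≤ k) (β : ℝ)
    (p : Fin m → Fin n → ℝ) (hp : IsJointPMF p)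
    (q : Fin k → Fin m → Fin n → ℝ) (hq : IsCondPMF q) :
    (latentUpdate β p q = q ↔
      ∀ v : Fin k → Fin m → Fin n → ℝ, (∀ x y, ∑ z, v z x y = 0) →
        deriv (fun t : ℝ => loss β p (fun z x y => q z x y + t * v z x y)) 0 = 0) ∧
    (latentUpdate β p q = q ↔
      ∃ δ : Fin m → Fin n → ℝ, ∀ z x y,
        Real.log (q z x y * (qZ p q z) ^ (1 - β) / (qX p q z x * qY p q z y)) = δ x y) :=
  latentUpdate_fixedPoint_iff_stationary_general m n k β p hp q hq
end

section
/- Let p be a strictly positive joint pmf on Fin m × Fin n and q a strictly positive conditional pmf, and let β ∈ ℝ. Then the loss decomposes as L_β(q) = ∑_{x,y,z} p x y · q z x y · log( q z x y / (qX z x · qY z y) ) + I(X;Y) + (1−β) ∑_z qZ z · log(qZ z), where I(X;Y) = ∑_{x,y} p x y · log( p x y / ((∑_{y'} p x y') · (∑_{x'} p x' y)) ). -/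
open Real Finset Filter

/-- Decomposition of the loss:
`L_β(q) = ∑ p(x,y) q(z|x,y) log(q(z|x,y)/(q(z|x) q(z|y))) + I(X;Y) + (1-β) ∑ q(z) log q(z)`. -/
theorem loss_decomposition (m n k : ℕ) (hm : 1 ≤ m) (hn : 1 ≤ n) (hk : 1 ≤ k) (β : ℝ)
    (p : Fin m → Fin n → ℝ) (hp : IsJointPMF p)
    (q : Fin k → Fin m → Fin n → ℝ) (hq : IsCondPMF q) :
    loss β p q =
      (∑ x, ∑ y, ∑ z, p x y * q z x y *
          Real.log (q z x y / (qX p q z x * qY p q z y))) +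
        mutualInfo p + (1 - β) * ∑ z, qZ p q z * Real.log (qZ p q z) := by
  obtain ⟨hp1, hp2⟩ := hp
  obtain ⟨hq1, hq2⟩ := hq
  have hpX : ∀ x, 0 < ∑ y, p x y := fun x =>
    Finset.sum_pos (fun y _ => hp1 x y) ⟨⟨0, hn⟩, Finset.mem_univ _⟩
  have hpY : ∀ y, 0 < ∑ x, p x y := fun y =>
    Finset.sum_pos (fun x _ => hp1 x y) ⟨⟨0, hm⟩, Finset.mem_univ _⟩
  have hA : ∀ z x, 0 < ∑ y, q z x y * p x y := fun z x =>
    Finset.sum_pos (fun y _ => mul_pos (hq1 z x y) (hp1 x y)) ⟨⟨0, hn⟩, Finset.mem_univ _⟩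
  have hB : ∀ z y, 0 < ∑ x, q z x y * p x y := fun z y =>
    Finset.sum_pos (fun x _ => mul_pos (hq1 z x y) (hp1 x y)) ⟨⟨0, hm⟩, Finset.mem_univ _⟩
  have hZ : ∀ z, 0 < qZ p q z := fun z =>
    Finset.sum_pos (fun x _ => hA z x) ⟨⟨0, hm⟩, Finset.mem_univ _⟩
  have hqX : ∀ z x, 0 < qX p q z x := fun z x => div_pos (hA z x) (hpX x)
  have hqY : ∀ z y, 0 < qY p q z y := fun z y => div_pos (hB z y) (hpY y)
  have e3 : ∑ z, qZ p q z * Real.log (qZ p q z)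
      = ∑ x, ∑ y, ∑ z, q z x y * p x y * Real.log (qZ p q z) := by
    have h1 : ∑ z, qZ p q z * Real.log (qZ p q z)
        = ∑ z, ∑ x, ∑ y, q z x y * p x y * Real.log (qZ p q z) := by
      refine Finset.sum_congr rfl fun z _ => ?_
      rw [qZ, Finset.sum_mul]
      exact Finset.sum_congr rfl fun x _ => Finset.sum_mul _ _ _
    rw [h1, Finset.sum_comm]
    exact Finset.sum_congr rfl fun x _ => Finset.sum_comm
  have e2 : mutualInfo p
      = ∑ x, ∑ y, ∑ z, q z x y * p x y *
          Real.log (p x y / ((∑ y', p x y') * (∑ x', p x' y))) := by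
    refine Finset.sum_congr rfl fun x _ => Finset.sum_congr rfl fun y _ => ?_
    rw [← Finset.sum_mul, ← Finset.sum_mul, hq2 x y, one_mul]
  rw [loss, e2, e3]
  have key : ∀ x y z,
      (q z x y * p x y) *
        Real.log ((q z x y * p x y) * qZ p q z /
          ((∑ y', q z x y' * p x y') * (∑ x', q z x' y * p x' y)))
      = p x y * q z x y * Real.log (q z x y / (qX p q z x * qY p q z y))
        + q z x y * p x y * Real.log (p x y / ((∑ y', p x y') * (∑ x', p x' y)))
        + q z x y * p x y * Real.log (qZ p q z) := by
    intro x y z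
    have harg : (q z x y * p x y) * qZ p q z /
          ((∑ y', q z x y' * p x y') * (∑ x', q z x' y * p x' y))
        = (q z x y / (qX p q z x * qY p q z y)) *
            (p x y / ((∑ y', p x y') * (∑ x', p x' y))) * qZ p q z := by
      rw [qX, qY]
      field_simp [ne_of_gt (hpX x), ne_of_gt (hpY y), ne_of_gt (hA z x), ne_of_gt (hB z y)]
    have h1 : q z x y / (qX p q z x * qY p q z y) ≠ 0 :=
      ne_of_gt (div_pos (hq1 z x y) (mul_pos (hqX z x) (hqY z y)))
    have h2 : p x y / ((∑ y', p x y') * (∑ x', p x' y)) ≠ 0 :=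
      ne_of_gt (div_pos (hp1 x y) (mul_pos (hpX x) (hpY y)))
    rw [harg, Real.log_mul (mul_ne_zero h1 h2) (ne_of_gt (hZ z)),
      Real.log_mul h1 h2]
    ring
  have hsum : ∑ x, ∑ y, ∑ z,
      (q z x y * p x y) *
        Real.log ((q z x y * p x y) * qZ p q z /
          ((∑ y', q z x y' * p x y') * (∑ x', q z x' y * p x' y)))
      = (∑ x, ∑ y, ∑ z, p x y * q z x y *
            Real.log (q z x y / (qX p q z x * qY p q z y)))
        + (∑ x, ∑ y, ∑ z, q z x y * p x y *
            Real.log (p x y / ((∑ y', p x y') * (∑ x', p x' y))))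
        + (∑ x, ∑ y, ∑ z, q z x y * p x y * Real.log (qZ p q z)) := by
    rw [← Finset.sum_add_distrib, ← Finset.sum_add_distrib]
    refine Finset.sum_congr rfl fun x _ => ?_
    rw [← Finset.sum_add_distrib, ← Finset.sum_add_distrib]
    refine Finset.sum_congr rfl fun y _ => ?_
    rw [← Finset.sum_add_distrib, ← Finset.sum_add_distrib]
    exact Finset.sum_congr rfl fun z _ => key x y z
  rw [hsum]
  ring
end

section
/- (Rank obstruction to conditionally independent extensions.) Let p : Fin m → Fin n → ℝ be a pmf (nonnegative entries summing to 1) and suppose q is a conditionally independent extension of p with latent cardinality k. Then the m × n real matrix M defined by M x y = p x y has rank at most k. -/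
open Finset

/-- A conditionally independent extension of the pmf `p` with latent cardinality `k`:
a nonnegative joint `q` on `Fin m × Fin n × Fin k` whose `(X,Y)`-marginal is `p` and under
which `X` and `Y` are conditionally independent given `Z`. -/
def IsCIExtension {m n k : ℕ} (p : Fin m → Fin n → ℝ)
    (q : Fin m → Fin n → Fin k → ℝ) : Prop :=
  (∀ x y z, 0 ≤ q x y z) ∧
  (∀ x y, ∑ z, q x y z = p x y) ∧
  (∀ x y z, q x y z * (∑ x', ∑ y', q x' y' z) =
    (∑ y', q x y' z) * (∑ x', q x' y z))

/-- Rank obstruction to conditionally independent extensions: if the pmf `p`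
admits a conditionally independent extension with latent cardinality `k`, then the matrix
`M x y = p x y` has rank at most `k`. -/
theorem rank_le_of_ciExtension (m n k : ℕ)
    (p : Fin m → Fin n → ℝ)
    (hp0 : ∀ x y, 0 ≤ p x y) (hp1 : ∑ x, ∑ y, p x y = 1)
    (q : Fin m → Fin n → Fin k → ℝ) (hq : IsCIExtension p q) :
    (Matrix.of fun x y => p x y).rank ≤ k := by
  obtain ⟨hq0, hqm, hci⟩ := hq
  set s : Fin k → ℝ := fun z => ∑ x, ∑ y, q x y z with hs
  have hs0 : ∀ z, 0 ≤ s z := fun z =>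
    Finset.sum_nonneg fun x _ => Finset.sum_nonneg fun y _ => hq0 x y z
  have hqle : ∀ x y z, q x y z ≤ s z := by
    intro x y z
    calc q x y z ≤ ∑ y', q x y' z :=
          Finset.single_le_sum (fun y' _ => hq0 x y' z) (Finset.mem_univ y)
      _ ≤ s z := Finset.single_le_sum
          (fun x' _ => Finset.sum_nonneg fun y' _ => hq0 x' y' z) (Finset.mem_univ x)
  set A : Matrix (Fin m) (Fin k) ℝ :=
    Matrix.of fun x z => if s z = 0 then 0 else (∑ y, q x y z) / s z with hA
  set B : Matrix (Fin k) (Fin n) ℝ := Matrix.of fun z y => ∑ x, q x y z with hB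
  have hM : (Matrix.of fun x y => p x y) = A * B := by
    ext x y
    simp only [Matrix.mul_apply, Matrix.of_apply, hA, hB]
    rw [← hqm x y]
    refine Finset.sum_congr rfl fun z _ => ?_
    by_cases h : s z = 0
    · have hz : q x y z = 0 :=
        le_antisymm (h ▸ hqle x y z) (hq0 x y z)
      simp [h, hz]
    · simp only [h, if_false]
      have := hci x y z
      field_simp
      linarith [hci x y z]
  rw [hM]
  calc (A * B).rank ≤ A.rank := Matrix.rank_mul_le_left A B
    _ ≤ Fintype.card (Fin k) := Matrix.rank_le_card_width A
    _ = k := Fintype.card_fin k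
end

section
/- (Identifiability, Theorem 3.) Fix integers m, n, k with 1 ≤ k < min{m, n}. For Lebesgue-almost-every parameter tuple (ζ, (ξ_i)_{i ∈ Fin k}, (η_{i,j})_{(i,j) ∈ Fin k × Fin m}) in the triangle-graph parameter space, the resulting pmf p on Fin m × Fin n admits no conditionally independent extension with latent cardinality k: there is no function q : Fin m → Fin n → Fin k → ℝ with q x y z ≥ 0 for all x, y, z, ∑_z q x y z = p(x, y) for all x, y, and q x y z · (∑_{x',y'} q x' y' z) = (∑_{y'} q x y' z) · (∑_{x'} q x' y z) for all x, y, z. Equivalently, when the distribution of Z and the conditionals P(X|z) and P(Y|x,z) are sampled independently and uniformly from the appropriate probability simplices, then with probability 1 no joint distribution q(x,y,z) has marginal p(x,y) and makes X and Y conditionally independent given Z. -/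
open Finset MeasureTheory

/-- The parametrized simplex `Δ_{n-1} ⊆ ℝ^{n-1}`:
`{a | a_j ≥ 0 for all j, ∑ j, a j ≤ 1}`. -/
def simplexParam (n : ℕ) : Set (Fin (n - 1) → ℝ) :=
  {a | (∀ j, 0 ≤ a j) ∧ ∑ j, a j ≤ 1}

/-- The lift `φ_n : ℝ^{n-1} → ℝⁿ`, `φ_n(a) = (a_1, …, a_{n-1}, 1 - ∑ j, a j)`, which maps
`Δ_{n-1}` onto the standard probability simplex in `ℝⁿ`. -/
noncomputable def liftSimplex (n : ℕ) (a : Fin (n - 1) → ℝ) : Fin n → ℝ :=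
  fun i => if h : (i : ℕ) < n - 1 then a ⟨i, h⟩ else 1 - ∑ j, a j

/-- The triangle-graph parameter space: `ζ ∈ Δ_{k-1}` parametrizes `P(Z)`, each `ξ i ∈ Δ_{m-1}`
parametrizes `P(X | Z = i)`, and each `η i j ∈ Δ_{n-1}` parametrizes `P(Y | Z = i, X = j)`. -/
def InTriangleParams (m n k : ℕ)
    (θ : (Fin (k - 1) → ℝ) × (Fin k → Fin (m - 1) → ℝ) ×
      (Fin k → Fin m → Fin (n - 1) → ℝ)) : Prop :=
  θ.1 ∈ simplexParam k ∧ (∀ i, θ.2.1 i ∈ simplexParam m) ∧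
    ∀ i j, θ.2.2 i j ∈ simplexParam n

/-- The joint pmf of `(X, Y)` generated by the triangle causal graph
`Z → X`, `Z → Y`, `X → Y`:
`p(x, y) = ∑ i, P(Z = i) P(X = x | Z = i) P(Y = y | Z = i, X = x)`. -/
noncomputable def trianglePMF (m n k : ℕ)
    (θ : (Fin (k - 1) → ℝ) × (Fin k → Fin (m - 1) → ℝ) ×
      (Fin k → Fin m → Fin (n - 1) → ℝ)) (x : Fin m) (y : Fin n) : ℝ :=
  ∑ i, liftSimplex k θ.1 i * liftSimplex m (θ.2.1 i) x * liftSimplex n (θ.2.2 i x) y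

/-!
A conditionally independent extension `q` factors `p(x, y) = ∑ z, P(X = x | z) · P(Y = y, Z = z)`
through `ℝ^k`, so every `(k+1) × (k+1)` minor of `p` vanishes. A fixed such minor is a polynomial
in the parameters, and not the zero polynomial: with `Z` and `X` uniform and `Y = X` the minor is
`m⁻¹ • 1`. The zero set of a nonzero real polynomial is Lebesgue-null, by induction on the number
of variables: by Fubini, off the null zero set of the leading coefficient in the adjoined
variable, each slice is the finite root set of a nonzero univariate polynomial.
-/

theorem MeasureTheory.Measure.prod_null_of_ae_finite {α β : Type*} [MeasurableSpace α]
    [MeasurableSpace β] {μ : Measure α} {ν : Measure β} [SFinite ν] [NullSingletonClass ν]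
    {s : Set (α × β)} (hs : MeasurableSet s) (h : ∀ᵐ a ∂μ, (Prod.mk a ⁻¹' s).Finite) :
    μ.prod ν s = 0 :=
  (Measure.measure_prod_null hs).2 (h.mono fun _ ha => ha.measure_zero ν)

theorem MeasureTheory.measurePreserving_curry (ι κ X : Type*) [Fintype ι] [Fintype κ]
    [MeasurableSpace X] (μ : Measure X) [SigmaFinite μ] :
    MeasurePreserving (MeasurableEquiv.curry ι κ X) (Measure.pi fun _ => μ)
      (Measure.pi fun _ => Measure.pi fun _ => μ) := by
  refine MeasurePreserving.symm _ ⟨(MeasurableEquiv.curry ι κ X).symm.measurable, ?_⟩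
  refine (Measure.pi_eq fun s _ => ?_).symm
  have hbox : (MeasurableEquiv.curry ι κ X).symm ⁻¹' Set.univ.pi s =
      Set.univ.pi fun i => Set.univ.pi fun j => s (i, j) := by
    ext f
    simp [MeasurableEquiv.curry]
  simp_rw [MeasurableEquiv.map_apply, hbox, Measure.pi_pi, Fintype.prod_prod_type]

namespace MvPolynomial

theorem volume_setOf_eval_rename_eq {σ τ : Type*} [Fintype σ] [Fintype τ] (e : σ ≃ τ)
    (p : MvPolynomial τ ℝ) :
    volume {x : σ → ℝ | eval x (rename e.symm p) = 0} = volume {x : τ → ℝ | eval x p = 0} := by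
  rw [← (volume_measurePreserving_piCongrLeft (fun _ : τ => ℝ) e).measure_preimage_equiv]
  congr 1
  ext x
  simp only [Set.mem_preimage, Set.mem_ofPred_eq, eval_rename]
  congr! 3
  funext b
  obtain ⟨a, rfl⟩ := e.surjective b
  simp [MeasurableEquiv.piCongrLeft_apply_apply]

theorem volume_setOf_eval_eq_zero {σ : Type*} [Fintype σ] {p : MvPolynomial σ ℝ} (hp : p ≠ 0) :
    volume {x : σ → ℝ | eval x p = 0} = 0 := by
  refine Fintype.induction_empty_option (P := fun σ _ => ∀ p : MvPolynomial σ ℝ, p ≠ 0 →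
    volume {x : σ → ℝ | eval x p = 0} = 0) ?_ ?_ ?_ σ p hp
  · intro σ τ _ e ih p hp
    let _ := Fintype.ofEquiv τ e.symm
    rw [← volume_setOf_eval_rename_eq e]
    exact ih _ ((rename_injective _ e.symm.injective).ne_iff' (map_zero _) |>.2 hp)
  · intro p hp
    obtain ⟨c, rfl⟩ := C_surjective PEmpty p
    have hc : c ≠ 0 := by
      rintro rfl
      exact hp (map_zero C)
    simp [hc]
  · intro σ _ ih p hp
    set e := MeasurableEquiv.piOptionEquivProd fun _ : Option σ => ℝ
    have he : MeasurePreserving e.symm (volume.prod volume) volume :=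
      ⟨e.symm.measurable, Measure.pi_map_piOptionEquivProd fun _ => volume⟩
    rw [← he.measure_preimage_equiv]
    set Q := optionEquivLeft ℝ σ p
    have hQ : Q ≠ 0 := by simpa [Q] using hp
    refine Measure.prod_null_of_ae_finite
      ((measurableSet_eq_fun (continuous_eval p).measurable measurable_const).preimage
        e.symm.measurable) ?_
    filter_upwards [compl_mem_ae_iff.2 (ih _ (Polynomial.leadingCoeff_ne_zero.2 hQ))] with s hs
    have hmap : Q.map (eval s) ≠ 0 := by
      refine Polynomial.leadingCoeff_ne_zero.1 ?_
      rwa [Polynomial.leadingCoeff_map_of_leadingCoeff_ne_zero _ hs]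
    convert Polynomial.finite_setOfPred_isRoot hmap using 1
    ext t
    change eval (e.symm (s, t)) p = 0 ↔ Polynomial.eval t (Q.map (eval s)) = 0
    rw [← optionEquivLeft_elim_eval]
    congr! 3
    funext i
    cases i <;> rfl

theorem measure_setOf_eq_zero_of_comp_eq_eval {σ α : Type*} [Fintype σ] [MeasurableSpace α]
    {μ : Measure α} {e : (σ → ℝ) ≃ᵐ α} (he : MeasurePreserving e volume μ) {f : α → ℝ}
    {P : MvPolynomial σ ℝ} (hfP : ∀ c, f (e c) = eval c P) {a : α} (ha : f a ≠ 0) :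
    μ {a | f a = 0} = 0 := by
  have hP : P ≠ 0 := by
    rintro rfl
    exact ha (by simpa using hfP (e.symm a))
  rw [← he.measure_preimage_equiv]
  convert volume_setOf_eval_eq_zero hP using 2
  simp [hfP]

end MvPolynomial

theorem Matrix.det_mul_eq_zero_of_card_lt {K n κ : Type*} [Field K] [Fintype n] [DecidableEq n]
    [Fintype κ] (U : Matrix n κ K) (W : Matrix κ n K) (h : Fintype.card κ < Fintype.card n) :
    (U * W).det = 0 := by
  by_contra hdet
  have hrank := (U * W).rank_of_isUnit
    ((U * W).isUnit_iff_isUnit_det.2 (isUnit_iff_ne_zero.2 hdet))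
  have := (U.rank_mul_le_right W).trans W.rank_le_card_height
  omega

namespace IsCIExtension

variable {m n k : ℕ} {p : Fin m → Fin n → ℝ} {q : Fin m → Fin n → Fin k → ℝ}

theorem exists_eq_mul (h : IsCIExtension p q) :
    ∃ (U : Matrix (Fin m) (Fin k) ℝ) (W : Matrix (Fin k) (Fin n) ℝ), Matrix.of p = U * W := by
  obtain ⟨hnonneg, hsum, hci⟩ := h
  refine ⟨.of fun x z => (∑ y', q x y' z) / ∑ x', ∑ y', q x' y' z,
    .of fun z y => ∑ x', q x' y z, ?_⟩
  ext x y
  simp only [Matrix.of_apply, Matrix.mul_apply, ← hsum]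
  refine Finset.sum_congr rfl fun z _ => ?_
  rcases eq_or_ne (∑ x', ∑ y', q x' y' z) 0 with hz | hz
  · -- a `z`-slice of mass zero vanishes, and so does its factorization since `_ / 0 = 0`
    have hxz := (Fintype.sum_eq_zero_iff_of_nonneg fun x' =>
      Finset.sum_nonneg fun y' _ => hnonneg x' y' z).1 hz
    have hxyz := (Fintype.sum_eq_zero_iff_of_nonneg fun y' => hnonneg x y' z).1 (congrFun hxz x)
    simp [hz, congrFun hxyz y]
  · rw [div_mul_eq_mul_div, eq_div_iff hz, hci]

theorem det_submatrix_eq_zero (h : IsCIExtension p q) {ι : Type*} [Fintype ι] [DecidableEq ι]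
    (f : ι → Fin m) (g : ι → Fin n) (hι : k < Fintype.card ι) :
    ((Matrix.of p).submatrix f g).det = 0 := by
  obtain ⟨U, W, hUW⟩ := h.exists_eq_mul
  rw [hUW, Matrix.submatrix_mul U W f id g Function.bijective_id]
  exact Matrix.det_mul_eq_zero_of_card_lt _ _ (by simpa using hι)

end IsCIExtension

theorem liftSimplex_eq_of_sum_range_eq_one {n : ℕ} (f : ℕ → ℝ) (hf : ∑ j ∈ range n, f j = 1)
    (i : Fin n) : liftSimplex n (fun j => f j) i = f i := by
  unfold liftSimplex
  split_ifs with hi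
  · rfl
  · obtain ⟨n, rfl⟩ : ∃ n', n = n' + 1 := ⟨n - 1, by omega⟩
    rw [Finset.sum_range_succ] at hf
    rw [Fin.sum_univ_eq_sum_range (fun j => f j), show (i : ℕ) = n by omega]
    simp only [Nat.add_sub_cancel]
    linarith

abbrev TriangleParam (m n k : ℕ) : Type :=
  (Fin (k - 1) → ℝ) × (Fin k → Fin (m - 1) → ℝ) × (Fin k → Fin m → Fin (n - 1) → ℝ)

abbrev TriangleCoord (m n k : ℕ) : Type :=
  Fin (k - 1) ⊕ (Fin k × Fin (m - 1)) ⊕ (Fin k × Fin m × Fin (n - 1))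

def triangleCoordEquiv (m n k : ℕ) : (TriangleCoord m n k → ℝ) ≃ᵐ TriangleParam m n k :=
  (MeasurableEquiv.sumPiEquivProdPi _).trans <| .prodCongr (.refl _) <|
    (MeasurableEquiv.sumPiEquivProdPi _).trans <| .prodCongr (.curry _ _ _) <|
      (MeasurableEquiv.curry _ _ _).trans (.piCongrRight fun _ => .curry _ _ _)

theorem measurePreserving_triangleCoordEquiv (m n k : ℕ) :
    MeasurePreserving (triangleCoordEquiv m n k) volume volume := by
  refine (MeasurePreserving.prod (.id volume) ?_).comp
    (volume_measurePreserving_sumPiEquivProdPi _)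
  refine (MeasurePreserving.prod (measurePreserving_curry _ _ _ volume) ?_).comp
    (volume_measurePreserving_sumPiEquivProdPi _)
  exact (measurePreserving_pi _ _ fun _ =>
    measurePreserving_curry (Fin m) (Fin (n - 1)) ℝ volume).comp
      (measurePreserving_curry (Fin k) (Fin m × Fin (n - 1)) ℝ volume)

noncomputable def liftSimplexPoly {σ : Type*} (n : ℕ) (v : Fin (n - 1) → σ) (i : Fin n) :
    MvPolynomial σ ℝ :=
  if h : (i : ℕ) < n - 1 then .X (v ⟨i, h⟩) else 1 - ∑ j, .X (v j)

theorem eval_liftSimplexPoly {σ : Type*} (n : ℕ) (v : Fin (n - 1) → σ) (c : σ → ℝ) (i : Fin n) :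
    MvPolynomial.eval c (liftSimplexPoly n v i) = liftSimplex n (c ∘ v) i := by
  unfold liftSimplexPoly liftSimplex
  split_ifs <;> simp

noncomputable def trianglePMFPoly (m n k : ℕ) (x : Fin m) (y : Fin n) :
    MvPolynomial (TriangleCoord m n k) ℝ :=
  ∑ i, liftSimplexPoly k .inl i * liftSimplexPoly m (fun j => .inr (.inl (i, j))) x *
    liftSimplexPoly n (fun j => .inr (.inr (i, x, j))) y

theorem eval_trianglePMFPoly (m n k : ℕ) (c : TriangleCoord m n k → ℝ) (x : Fin m) (y : Fin n) :
    MvPolynomial.eval c (trianglePMFPoly m n k x y) =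
      trianglePMF m n k (triangleCoordEquiv m n k c) x y := by
  simp only [trianglePMFPoly, trianglePMF, map_sum, map_mul, eval_liftSimplexPoly]
  rfl

noncomputable def triangleWitness (m n k : ℕ) : TriangleParam m n k :=
  (fun _ => (k : ℝ)⁻¹, fun _ _ => (m : ℝ)⁻¹, fun _ x j => if (j : ℕ) = x then 1 else 0)

theorem trianglePMF_triangleWitness {m n k : ℕ} (hk : 1 ≤ k) {x : Fin m} (hx : (x : ℕ) < n)
    (y : Fin n) :
    trianglePMF m n k (triangleWitness m n k) x y = (m : ℝ)⁻¹ * if (y : ℕ) = x then 1 else 0 := by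
  have hk0 : (k : ℝ) ≠ 0 := by positivity
  have hm0 : (m : ℝ) ≠ 0 := by
    have := x.pos
    positivity
  have hZ := liftSimplex_eq_of_sum_range_eq_one (n := k) (fun _ => (k : ℝ)⁻¹) (by simp [hk0])
  have hX := liftSimplex_eq_of_sum_range_eq_one (n := m) (fun _ => (m : ℝ)⁻¹) (by simp [hm0])
  have hY := liftSimplex_eq_of_sum_range_eq_one (n := n) (fun j => if j = x then 1 else 0)
    (by simp [hx])
  simp only [trianglePMF, triangleWitness, hZ, hX, hY, Finset.sum_const, Finset.card_univ,
    Fintype.card_fin, nsmul_eq_mul]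
  field_simp

theorem det_triangleWitness_ne_zero {m n k : ℕ} (hk : 1 ≤ k) (hkm : k < m) (hkn : k < n) :
    ((Matrix.of (trianglePMF m n k (triangleWitness m n k))).submatrix
      (Fin.castLE hkm) (Fin.castLE hkn)).det ≠ 0 := by
  have hminor : (Matrix.of (trianglePMF m n k (triangleWitness m n k))).submatrix
      (Fin.castLE hkm) (Fin.castLE hkn) = (m : ℝ)⁻¹ • 1 := by
    ext a b
    rw [Matrix.submatrix_apply, Matrix.of_apply,
      trianglePMF_triangleWitness hk (by rw [Fin.val_castLE]; omega)]
    simp [Matrix.one_apply, Fin.ext_iff, eq_comm]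
  rw [hminor, Matrix.det_smul, Matrix.det_one, mul_one]
  exact pow_ne_zero _ (inv_ne_zero (Nat.cast_ne_zero.2 (by omega)))

/-- **Identifiability, Theorem 3.** For `1 ≤ k < min{m, n}`, Lebesgue-almost
every parameter tuple of the triangle graph yields a joint pmf `p` on `Fin m × Fin n` admitting
no conditionally independent extension with latent cardinality `k`. -/
theorem triangle_no_ci_extension_ae (m n k : ℕ)
    (hk : 1 ≤ k) (hkm : k < m) (hkn : k < n) :
    volume {θ : (Fin (k - 1) → ℝ) × (Fin k → Fin (m - 1) → ℝ) ×
        (Fin k → Fin m → Fin (n - 1) → ℝ) |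
      InTriangleParams m n k θ ∧
      ∃ q : Fin m → Fin n → Fin k → ℝ, IsCIExtension (trianglePMF m n k θ) q} = 0 := by
  let minor (θ : TriangleParam m n k) : ℝ :=
    ((Matrix.of (trianglePMF m n k θ)).submatrix (Fin.castLE hkm) (Fin.castLE hkn)).det
  let minorPoly : MvPolynomial (TriangleCoord m n k) ℝ :=
    ((Matrix.of (trianglePMFPoly m n k)).submatrix (Fin.castLE hkm) (Fin.castLE hkn)).det
  have hCI (θ) (hθ : ∃ q : Fin m → Fin n → Fin k → ℝ, IsCIExtension (trianglePMF m n k θ) q) :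
      minor θ = 0 := by
    obtain ⟨q, hq⟩ := hθ
    exact hq.det_submatrix_eq_zero _ _ (by simp)
  have hpoly (c) : minor (triangleCoordEquiv m n k c) = MvPolynomial.eval c minorPoly := by
    simp only [minor, minorPoly, RingHom.map_det]
    congr 1
    ext a b
    simp [eval_trianglePMFPoly]
  refine measure_mono_null (fun θ hθ => hCI θ hθ.2) ?_
  exact MvPolynomial.measure_setOf_eq_zero_of_comp_eq_eval
    (measurePreserving_triangleCoordEquiv m n k) hpoly (det_triangleWitness_ne_zero hk hkm hkn)
end
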